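/- arXiv:1104.0351 — 6 statements merged into one kernel-verified Lean document; each statement's English description precedes it below -/
import Mathlib

section
/- For any permutation σ of {1,…,n}, if events are placed at spacetime coordinates x_i = 2(i − σ(i)) and t_i = i in a 1+1-dimensional rest frame, then an observer moving with velocity v = 1/2 sees event i at Lorentz-transformed time t_i' = γ·σ(i), where γ = 1/√(1−v²); in particular the two observers see the events in orders given by the identity and by σ, respectively. Hence any pair of permutations of n events is realizable by two inertial observers in 1+1-dimensional spacetime. -/
/-- For any permutation σ of n events, placing event i at x_i = 2(i - σ i), t_i = i
in the rest frame, the observer moving at v = 1/2 sees event i at time γ·σ(i),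
the rest frame sees the identity order, and the boosted observer sees order σ. -/
theorem stmt0 (n : ℕ) (σ : Equiv.Perm (Fin n)) :
    let t : Fin n → ℝ := fun i => (i : ℝ)
    let x : Fin n → ℝ := fun i => 2 * ((i : ℝ) - ((σ i : ℕ) : ℝ))
    let v : ℝ := 1 / 2
    let γ : ℝ := 1 / Real.sqrt (1 - v ^ 2)
    (∀ i, γ * (t i - v * x i) = γ * ((σ i : ℕ) : ℝ)) ∧
    (∀ i j : Fin n, i < j → t i < t j) ∧
    (∀ i j : Fin n, σ i < σ j → γ * (t i - v * x i) < γ * (t j - v * x j)) := by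
  intro t x v γ
  have hγ : 0 < γ := by
    have : (0:ℝ) < Real.sqrt (1 - v ^ 2) := by
      apply Real.sqrt_pos.mpr; norm_num [v]
    positivity
  have key : ∀ i, γ * (t i - v * x i) = γ * ((σ i : ℕ) : ℝ) := by
    intro i; simp only [t, x, v]; ring
  refine ⟨key, ?_, ?_⟩
  · intro i j hij
    exact_mod_cast Nat.cast_lt.mpr hij
  · intro i j hij
    rw [key i, key j]
    have : ((σ i : ℕ) : ℝ) < ((σ j : ℕ) : ℝ) := by exact_mod_cast hij
    exact mul_lt_mul_of_pos_left this hγ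
end

section
/- There do not exist real numbers t₁ < t₂ < t₃, real numbers x₁, x₂, x₃, and velocities v⁽¹⁾, v⁽²⁾ with 0 < v⁽¹⁾ < 1 and 0 < v⁽²⁾ < 1, such that t₂ − v⁽¹⁾x₂ < t₃ − v⁽¹⁾x₃ < t₁ − v⁽¹⁾x₁ and t₃ − v⁽²⁾x₃ < t₁ − v⁽²⁾x₁ < t₂ − v⁽²⁾x₂. In other words, the triple of orderings {(1,2,3), (2,3,1), (3,1,2)} of three events is not realizable by three inertial observers (moving in the same positive direction) in 1+1-dimensional Minkowski spacetime. -/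
/-- The triple of orderings {(1,2,3),(2,3,1),(3,1,2)} is not realizable by three
inertial observers (moving in the same positive direction) in 1+1 Minkowski spacetime. -/
theorem stmt1 :
    ¬ ∃ (t₁ t₂ t₃ x₁ x₂ x₃ v₁ v₂ : ℝ),
      t₁ < t₂ ∧ t₂ < t₃ ∧
      0 < v₁ ∧ v₁ < 1 ∧ 0 < v₂ ∧ v₂ < 1 ∧
      t₂ - v₁ * x₂ < t₃ - v₁ * x₃ ∧ t₃ - v₁ * x₃ < t₁ - v₁ * x₁ ∧
      t₃ - v₂ * x₃ < t₁ - v₂ * x₁ ∧ t₁ - v₂ * x₁ < t₂ - v₂ * x₂ := by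
  rintro ⟨t₁, t₂, t₃, x₁, x₂, x₃, v₁, v₂, h12, h23, hv1, _, hv2, _, hA, hB, hC, hD⟩
  -- abbreviations: a = t₂ - t₁ > 0, c = t₃ - t₂ > 0, p = x₂ - x₁, q = x₃ - x₂
  have h1 : t₂ - t₁ < v₁ * (x₂ - x₁) := by nlinarith
  have h2 : v₂ * (x₂ - x₁) < t₂ - t₁ := by nlinarith
  have h3 : v₁ * (x₃ - x₂) < t₃ - t₂ := by nlinarith
  have h4 : t₃ - t₂ < v₂ * (x₃ - x₂) := by nlinarith
  have ha : (0:ℝ) < t₂ - t₁ := by linarith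
  have hc : (0:ℝ) < t₃ - t₂ := by linarith
  have P1 : (t₂ - t₁) * (t₃ - t₂) < (v₁ * (x₂ - x₁)) * (v₂ * (x₃ - x₂)) :=
    mul_lt_mul'' h1 h4 ha.le hc.le
  have P2 : (v₂ * (x₂ - x₁)) * (v₁ * (x₃ - x₂)) < (t₂ - t₁) * (t₃ - t₂) :=
    mul_lt_mul'' h2 h3 (by nlinarith) (by nlinarith)
  nlinarith [P1, P2]
end

section
/- Suppose real numbers t₁ < t₂ < t₃, positions x₁, x₂, x₃ ∈ ℝ, and positive velocities v⁽¹⁾, v⁽²⁾ satisfy: observer 1 sees event 2 before event 1 and event 3 before event 1 (i.e., t₂ − v⁽¹⁾x₂ < t₁ − v⁽¹⁾x₁ and t₃ − v⁽¹⁾x₃ < t₁ − v⁽¹⁾x₁), and observer 2 sees event 3 before events 1 and 2 (i.e., t₃ − v⁽²⁾x₃ < t₁ − v⁽²⁾x₁ and t₃ − v⁽²⁾x₃ < t₂ − v⁽²⁾x₂). Then x₁ < x₂ < x₃. -/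
/-- If the rest frame sees order (1,2,3) and two observers with positive velocities
see event orderings consistent with (2,3,1) and (3,1,2), then x₁ < x₂ < x₃. -/
theorem stmt2 (t₁ t₂ t₃ x₁ x₂ x₃ v₁ v₂ : ℝ)
    (ht₁₂ : t₁ < t₂) (ht₂₃ : t₂ < t₃)
    (hv₁ : 0 < v₁) (hv₂ : 0 < v₂)
    (h1 : t₂ - v₁ * x₂ < t₁ - v₁ * x₁)
    (h2 : t₃ - v₁ * x₃ < t₁ - v₁ * x₁)
    (h3 : t₃ - v₂ * x₃ < t₁ - v₂ * x₁)
    (h4 : t₃ - v₂ * x₃ < t₂ - v₂ * x₂) :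
    x₁ < x₂ ∧ x₂ < x₃ := by
  constructor
  · nlinarith
  · nlinarith
end

section
/- There do not exist real numbers t₁ < t₂ < t₃ < t₄ < t₅ < t₆ and positions x₁,…,x₆ ∈ ℝ and velocities u, v ∈ (−1, 1) such that the observer with velocity u sees the six events in the order (2,1,3,4,6,5) and the observer with velocity v sees them in the order (1,2,4,3,6,5). That is, the triple of orderings {(1,2,3,4,5,6), (2,1,3,4,6,5), (1,2,4,3,6,5)} of six events is not realizable by three observers in 1+1-dimensional Minkowski spacetime. -/
/-- If `p*s` and `q*s` are both positive, so is `p*q`. -/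
lemma stmt3_aux {p q s : ℝ} (h1 : 0 < p * s) (h2 : 0 < q * s) : 0 < p * q := by
  have hs : s ≠ 0 := by rintro rfl; simp at h1
  have hs2 : 0 < s ^ 2 := by positivity
  have hps : 0 < (p * s) * (q * s) := mul_pos h1 h2
  by_contra h
  push_neg at h
  nlinarith

/-- The triple of orderings {(1,2,3,4,5,6),(2,1,3,4,6,5),(1,2,4,3,6,5)} of six events
is not realizable by three observers in 1+1-dimensional Minkowski spacetime. -/
theorem stmt3 :
    ¬ ∃ (t₁ t₂ t₃ t₄ t₅ t₆ x₁ x₂ x₃ x₄ x₅ x₆ u v : ℝ),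
      t₁ < t₂ ∧ t₂ < t₃ ∧ t₃ < t₄ ∧ t₄ < t₅ ∧ t₅ < t₆ ∧
      -1 < u ∧ u < 1 ∧ -1 < v ∧ v < 1 ∧
      -- observer u sees order (2,1,3,4,6,5)
      t₂ - u * x₂ < t₁ - u * x₁ ∧ t₁ - u * x₁ < t₃ - u * x₃ ∧
      t₃ - u * x₃ < t₄ - u * x₄ ∧ t₄ - u * x₄ < t₆ - u * x₆ ∧
      t₆ - u * x₆ < t₅ - u * x₅ ∧
      -- observer v sees order (1,2,4,3,6,5)
      t₁ - v * x₁ < t₂ - v * x₂ ∧ t₂ - v * x₂ < t₄ - v * x₄ ∧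
      t₄ - v * x₄ < t₃ - v * x₃ ∧ t₃ - v * x₃ < t₆ - v * x₆ ∧
      t₆ - v * x₆ < t₅ - v * x₅ := by
  rintro ⟨t₁, t₂, t₃, t₄, t₅, t₆, x₁, x₂, x₃, x₄, x₅, x₆, u, v,
    h12, h23, h34, h45, h56, _, _, _, _,
    hu21, hu13, hu34, hu46, hu65, hv12, hv24, hv43, hv36, hv65⟩
  -- pair {1,2}: flips for u, not for v
  have hA : t₂ - t₁ < u * (x₂ - x₁) := by
    have := mul_sub u x₂ x₁; linarith
  have hA' : v * (x₂ - x₁) < t₂ - t₁ := by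
    have := mul_sub v x₂ x₁; linarith
  have hAp : 0 < u * (x₂ - x₁) := by linarith
  have hAd : 0 < (u - v) * (x₂ - x₁) := by
    have := sub_mul u v (x₂ - x₁); linarith
  have hU : 0 < (u - v) * u := stmt3_aux hAd hAp
  -- pair {3,4}: flips for v, not for u
  have hB : t₄ - t₃ < v * (x₄ - x₃) := by
    have := mul_sub v x₄ x₃; linarith
  have hB' : u * (x₄ - x₃) < t₄ - t₃ := by
    have := mul_sub u x₄ x₃; linarith
  have hBp : 0 < v * (x₄ - x₃) := by linarith
  have hBd : 0 < (v - u) * (x₄ - x₃) := by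
    have := sub_mul v u (x₄ - x₃); linarith
  have hV : 0 < (v - u) * v := stmt3_aux hBd hBp
  -- pair {5,6}: flips for both
  have hC : t₆ - t₅ < u * (x₆ - x₅) := by
    have := mul_sub u x₆ x₅; linarith
  have hC' : t₆ - t₅ < v * (x₆ - x₅) := by
    have := mul_sub v x₆ x₅; linarith
  have hCp : 0 < u * (x₆ - x₅) := by linarith
  have hCp' : 0 < v * (x₆ - x₅) := by linarith
  have huv : 0 < u * v := stmt3_aux hCp hCp'
  nlinarith [mul_pos hU hV, mul_nonneg (sq_nonneg (u - v)) huv.le]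
end

section
/- For any n ≥ 1 and any four permutations σ₀ = id, σ₁, σ₂, σ₃ ∈ S_n, there exist n events in 3+1-dimensional Minkowski spacetime and four inertial observers, with velocities 0, v₁e₁, v₂e₂, v₃e₃ (0 < v₁,v₂,v₃ < 1), such that observer j sees the events in order σ_j for j = 0,1,2,3. Concretely, taking rest-frame times t(E_i) = i and positions w(E_i) = ((i − σ₁(i))/v₁, (i − σ₂(i))/v₂, (i − σ₃(i))/v₃) achieves this, since then observer j's relativized time for E_i equals σ_j(i) (times a positive constant). -/
/-- Any four permutations σ₀ = id, σ₁, σ₂, σ₃ of n events are simultaneously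
realizable in 3+1-dimensional Minkowski spacetime by four observers with
velocities 0, v₁e₁, v₂e₂, v₃e₃ (0 < vⱼ < 1): there are rest-frame coordinates
with strictly increasing times such that observer j's relativized time for
event i equals σⱼ(i). -/
theorem stmt12 (n : ℕ) (σ₁ σ₂ σ₃ : Equiv.Perm (Fin n)) :
    ∃ (t : Fin n → ℝ) (w : Fin n → Fin 3 → ℝ) (v₁ v₂ v₃ : ℝ),
      0 < v₁ ∧ v₁ < 1 ∧ 0 < v₂ ∧ v₂ < 1 ∧ 0 < v₃ ∧ v₃ < 1 ∧
      (∀ i j : Fin n, i < j → t i < t j) ∧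
      (∀ i : Fin n, t i - v₁ * w i 0 = ((σ₁ i : ℕ) : ℝ)) ∧
      (∀ i : Fin n, t i - v₂ * w i 1 = ((σ₂ i : ℕ) : ℝ)) ∧
      (∀ i : Fin n, t i - v₃ * w i 2 = ((σ₃ i : ℕ) : ℝ)) := by
  refine ⟨fun i => (i : ℕ), fun i => ![2 * ((i : ℕ) - ((σ₁ i : ℕ) : ℝ)),
    2 * ((i : ℕ) - ((σ₂ i : ℕ) : ℝ)), 2 * ((i : ℕ) - ((σ₃ i : ℕ) : ℝ))],
    1/2, 1/2, 1/2, by norm_num, by norm_num, by norm_num, by norm_num,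
    by norm_num, by norm_num, ?_, ?_, ?_, ?_⟩
  · intro i j h; simpa using h
  all_goals intro i; simp
end

section
/- Let events E₁,…,E₅ have rest-frame times t_i = F₀(i) and positions w_i = (F₀(i) − F₁(π₁⁻¹(i)), F₀(i) − F₂(π₂⁻¹(i)), F₀(i) − F₃(π₃⁻¹(i))) ∈ ℝ³, where F₀, F₁, F₂, F₃ : {1,…,5} → ℝ are strictly increasing and π₁, π₂, π₃ ∈ S₅. Then the observer with velocity e_j = j-th standard basis vector (j = 1,2,3) has relativized time t_i − e_j·w_i = F_j(π_j⁻¹(i)) for event E_i, and hence sees the events in order π_j; the rest-frame observer sees them in order given by the identity. -/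
/-- With t_i = F₀(i) and w_i = (F₀(i) - F₁(π₁⁻¹ i), F₀(i) - F₂(π₂⁻¹ i),
F₀(i) - F₃(π₃⁻¹ i)) for strictly increasing F₀,…,F₃, the observer with velocity
the j-th standard basis vector has relativized time F_j(π_j⁻¹ i) for event i,
hence sees the events in order π_j, while the rest frame sees the identity order. -/
theorem stmt18 (F : Fin 4 → Fin 5 → ℝ) (hF : ∀ j, StrictMono (F j))
    (π : Fin 3 → Equiv.Perm (Fin 5)) :
    let t : Fin 5 → ℝ := fun i => F 0 i
    let w : Fin 5 → Fin 3 → ℝ := fun i j => F 0 i - F j.succ ((π j)⁻¹ i)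
    (∀ j : Fin 3, ∀ i : Fin 5, t i - w i j = F j.succ ((π j)⁻¹ i)) ∧
    (∀ j : Fin 3, ∀ a b : Fin 5, a < b →
      t (π j a) - w (π j a) j < t (π j b) - w (π j b) j) ∧
    (∀ a b : Fin 5, a < b → t a < t b) := by
  intro t w
  have relativized_time (j : Fin 3) (i : Fin 5) : t i - w i j = F j.succ ((π j)⁻¹ i) :=
    sub_sub_cancel _ _
  refine ⟨relativized_time, fun j a b hab => ?_, fun a b hab => hF 0 hab⟩
  simpa only [relativized_time, Equiv.Perm.coe_inv, Equiv.symm_apply_apply] using hF j.succ hab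
end
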